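/- arXiv:2201.07335 — 3 statements merged into one kernel-verified Lean document; each statement's English description precedes it below -/
import Mathlib

section
/- Let M_v be a symmetric real n×n matrix, M_e an invertible real m×m matrix, g ∈ ℝⁿ a fixed vector, F : ℝ → ℝ^{n×m} any (matrix-valued) function, and let v : ℝ → ℝⁿ, e : ℝ → ℝᵐ, x : ℝ → ℝⁿ be differentiable functions satisfying the semidiscrete Lagrangian conservation laws M_v v'(t) = −F(t)·𝟙 + M_v g, M_e e'(t) = F(t)ᵀ v(t), and x'(t) = v(t), where 𝟙 ∈ ℝᵐ is the all-ones vector. Then the total discrete energy E(t) = ½ v(t)ᵀ M_v v(t) + 𝟙ᵀ M_e e(t) − (M_v g)ᵀ x(t) is constant in t. -/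
/-!
The time derivative of the total energy is `v ⬝ (M_v v') + 𝟙 ⬝ (M_e e') - (M_v g) ⬝ v`, using the
symmetry of `M_v` for the kinetic term and `x' = v` for the potential term. Substituting the
momentum and energy equations, the force terms cancel because `𝟙 ⬝ (Fᵀ v) = v ⬝ (F 𝟙)`, and the
gravity terms cancel, so the derivative vanishes everywhere.
-/

open Matrix

section Deriv

variable {ι κ : Type*} [Fintype ι] {f g : ℝ → ι → ℝ} {f' g' : ι → ℝ} {t : ℝ}

theorem HasDerivAt.dotProduct (hf : HasDerivAt f f' t) (hg : HasDerivAt g g' t) :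
    HasDerivAt (fun s => f s ⬝ᵥ g s) (f' ⬝ᵥ g t + f t ⬝ᵥ g') t := by
  simp only [_root_.dotProduct, ← Finset.sum_add_distrib]
  exact HasDerivAt.fun_sum fun i _ => (hasDerivAt_pi.mp hf i).mul (hasDerivAt_pi.mp hg i)

theorem HasDerivAt.const_dotProduct (c : ι → ℝ) (hf : HasDerivAt f f' t) :
    HasDerivAt (fun s => c ⬝ᵥ f s) (c ⬝ᵥ f') t := by
  simpa using (hasDerivAt_const t c).dotProduct hf

theorem HasDerivAt.mulVec (M : Matrix κ ι ℝ) (hf : HasDerivAt f f' t) :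
    HasDerivAt (fun s => M *ᵥ f s) (M *ᵥ f') t :=
  hasDerivAt_pi.mpr fun i => hf.const_dotProduct (M i)

theorem HasDerivAt.dotProduct_mulVec_self {M : Matrix ι ι ℝ} (hM : M.IsSymm)
    (hf : HasDerivAt f f' t) :
    HasDerivAt (fun s => f s ⬝ᵥ (M *ᵥ f s)) (2 * (f t ⬝ᵥ (M *ᵥ f'))) t := by
  convert hf.dotProduct (hf.mulVec M) using 1
  rw [dotProduct_mulVec, dotProduct_comm, ← mulVec_transpose, hM.eq]
  ring

end Deriv

theorem semidiscrete_energy_conservation_with_gravity_general {n m : ℕ}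
    (Mv : Matrix (Fin n) (Fin n) ℝ) (Me : Matrix (Fin m) (Fin m) ℝ)
    (hMv : Mv.IsSymm)
    (g : Fin n → ℝ)
    (F : ℝ → Matrix (Fin n) (Fin m) ℝ)
    (v dv : ℝ → Fin n → ℝ) (e de : ℝ → Fin m → ℝ) (x dx : ℝ → Fin n → ℝ)
    (hv : ∀ t, HasDerivAt v (dv t) t)
    (he : ∀ t, HasDerivAt e (de t) t)
    (hx : ∀ t, HasDerivAt x (dx t) t)
    (hmom : ∀ t, Mv *ᵥ dv t = -(F t *ᵥ (fun _ => 1)) + Mv *ᵥ g)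
    (hen : ∀ t, Me *ᵥ de t = (F t)ᵀ *ᵥ v t)
    (hxeq : ∀ t, dx t = v t) :
    ∀ s t : ℝ,
      (1/2) * (v s ⬝ᵥ (Mv *ᵥ v s)) + (fun _ => (1:ℝ)) ⬝ᵥ (Me *ᵥ e s)
        - (Mv *ᵥ g) ⬝ᵥ x s
      = (1/2) * (v t ⬝ᵥ (Mv *ᵥ v t)) + (fun _ => (1:ℝ)) ⬝ᵥ (Me *ᵥ e t)
        - (Mv *ᵥ g) ⬝ᵥ x t := by
  have hderiv : ∀ t, HasDerivAt (fun t => (1/2) * (v t ⬝ᵥ (Mv *ᵥ v t))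
      + (fun _ => (1:ℝ)) ⬝ᵥ (Me *ᵥ e t) - (Mv *ᵥ g) ⬝ᵥ x t) 0 t := by
    intro t
    have hwork : (fun _ => (1:ℝ)) ⬝ᵥ ((F t)ᵀ *ᵥ v t) = v t ⬝ᵥ (F t *ᵥ (fun _ => 1)) := by
      rw [dotProduct_mulVec, vecMul_transpose, dotProduct_comm]
    refine ((((hv t).dotProduct_mulVec_self hMv).const_mul (1/2)).add
      (((he t).mulVec Me).const_dotProduct _)).sub
      ((hx t).const_dotProduct (Mv *ᵥ g)) |>.congr_deriv ?_
    rw [hmom, hen, hxeq, hwork, dotProduct_add, dotProduct_neg, dotProduct_comm (Mv *ᵥ g)]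
    ring
  exact fun s t => is_const_of_deriv_eq_zero (fun u => (hderiv u).differentiableAt)
    (fun u => (hderiv u).deriv) s t

/-- Energy conservation for the semidiscrete Lagrangian hydrodynamics system with gravity:
if `M_v v' = −F·𝟙 + M_v g`, `M_e e' = Fᵀ v`, and `x' = v`, then the total discrete energy
`½ vᵀ M_v v + 𝟙ᵀ M_e e − (M_v g)ᵀ x` is constant in time. -/
theorem semidiscrete_energy_conservation_with_gravity {n m : ℕ}
    (Mv : Matrix (Fin n) (Fin n) ℝ) (Me : Matrix (Fin m) (Fin m) ℝ)
    (hMv : Mv.IsSymm) (hMe : IsUnit Me.det)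
    (g : Fin n → ℝ)
    (F : ℝ → Matrix (Fin n) (Fin m) ℝ)
    (v dv : ℝ → Fin n → ℝ) (e de : ℝ → Fin m → ℝ) (x dx : ℝ → Fin n → ℝ)
    (hv : ∀ t, HasDerivAt v (dv t) t)
    (he : ∀ t, HasDerivAt e (de t) t)
    (hx : ∀ t, HasDerivAt x (dx t) t)
    (hmom : ∀ t, Mv *ᵥ dv t = -(F t *ᵥ (fun _ => 1)) + Mv *ᵥ g)
    (hen : ∀ t, Me *ᵥ de t = (F t)ᵀ *ᵥ v t)
    (hxeq : ∀ t, dx t = v t) :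
    ∀ s t : ℝ,
      (1/2) * (v s ⬝ᵥ (Mv *ᵥ v s)) + (fun _ => (1:ℝ)) ⬝ᵥ (Me *ᵥ e s)
        - (Mv *ᵥ g) ⬝ᵥ x s
      = (1/2) * (v t ⬝ᵥ (Mv *ᵥ v t)) + (fun _ => (1:ℝ)) ⬝ᵥ (Me *ᵥ e t)
        - (Mv *ᵥ g) ⬝ᵥ x t :=
  semidiscrete_energy_conservation_with_gravity_general Mv Me hMv g F v dv e de x dx hv he hx hmom
    hen hxeq
end

section
/- Let M_v be a symmetric invertible real n×n matrix, M_e an invertible real m×m matrix, g ∈ ℝⁿ, Δt ∈ ℝ, F ∈ ℝ^{n×m} any matrix, and 𝟙 ∈ ℝᵐ the all-ones vector. Given (v_n, e_n, x_n) ∈ ℝⁿ × ℝᵐ × ℝⁿ, define v_{n+1} = v_n + Δt(−M_v⁻¹ F 𝟙 + g), v̄ = (v_n + v_{n+1})/2, e_{n+1} = e_n + Δt M_e⁻¹ Fᵀ v̄, and x_{n+1} = x_n + Δt v̄. Then the total discrete energy is conserved exactly: ½ v_{n+1}ᵀ M_v v_{n+1} + 𝟙ᵀ M_e e_{n+1}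 − (M_v g)ᵀ x_{n+1} = ½ v_nᵀ M_v v_n + 𝟙ᵀ M_e e_n − (M_v g)ᵀ x_n. -/
open Matrix

/-- Exact total energy conservation of one RK2-average step:
`v₁ = v₀ + Δt(−M_v⁻¹ F 𝟙 + g)`, `v̄ = (v₀+v₁)/2`, `e₁ = e₀ + Δt M_e⁻¹ Fᵀ v̄`,
`x₁ = x₀ + Δt v̄` imply the total discrete energy is unchanged. -/
theorem rk2_average_step_energy_conservation {n m : ℕ}
    (Mv : Matrix (Fin n) (Fin n) ℝ) (Me : Matrix (Fin m) (Fin m) ℝ)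
    (hMvs : Mv.IsSymm) (hMv : IsUnit Mv.det) (hMe : IsUnit Me.det)
    (g : Fin n → ℝ) (Δt : ℝ) (F : Matrix (Fin n) (Fin m) ℝ)
    (v0 v1 vbar : Fin n → ℝ) (e0 e1 : Fin m → ℝ) (x0 x1 : Fin n → ℝ)
    (hv1 : v1 = v0 + Δt • (-(Mv⁻¹ *ᵥ (F *ᵥ fun _ => 1)) + g))
    (hvbar : vbar = (1/2 : ℝ) • (v0 + v1))
    (he1 : e1 = e0 + Δt • (Me⁻¹ *ᵥ (Fᵀ *ᵥ vbar)))
    (hx1 : x1 = x0 + Δt • vbar) :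
    (1/2) * (v1 ⬝ᵥ (Mv *ᵥ v1)) + (fun _ => (1:ℝ)) ⬝ᵥ (Me *ᵥ e1) - (Mv *ᵥ g) ⬝ᵥ x1
    = (1/2) * (v0 ⬝ᵥ (Mv *ᵥ v0)) + (fun _ => (1:ℝ)) ⬝ᵥ (Me *ᵥ e0) - (Mv *ᵥ g) ⬝ᵥ x0 := by
  have hS : ∀ a b : Fin n → ℝ, a ⬝ᵥ (Mv *ᵥ b) = b ⬝ᵥ (Mv *ᵥ a) := by
    intro a b
    rw [Matrix.dotProduct_mulVec, ← Matrix.mulVec_transpose, hMvs.eq, dotProduct_comm]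
  have hA : Mv *ᵥ (Mv⁻¹ *ᵥ (F *ᵥ fun _ => (1:ℝ))) = F *ᵥ (fun _ => (1:ℝ)) := by
    rw [Matrix.mulVec_mulVec, Matrix.mul_nonsing_inv Mv hMv, Matrix.one_mulVec]
  have hB : Me *ᵥ (Me⁻¹ *ᵥ (Fᵀ *ᵥ vbar)) = Fᵀ *ᵥ vbar := by
    rw [Matrix.mulVec_mulVec, Matrix.mul_nonsing_inv Me hMe, Matrix.one_mulVec]
  have hC : (fun _ => (1:ℝ)) ⬝ᵥ (Fᵀ *ᵥ vbar) = vbar ⬝ᵥ (F *ᵥ fun _ => (1:ℝ)) := by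
    rw [Matrix.dotProduct_mulVec, Matrix.vecMul_transpose, dotProduct_comm]
  -- internal energy change
  have hInt : (fun _ => (1:ℝ)) ⬝ᵥ (Me *ᵥ e1) =
      (fun _ => (1:ℝ)) ⬝ᵥ (Me *ᵥ e0) + Δt * (vbar ⬝ᵥ (F *ᵥ fun _ => (1:ℝ))) := by
    rw [he1]
    simp [Matrix.mulVec_add, Matrix.mulVec_smul, ← Matrix.mul_assoc,
      Matrix.mul_nonsing_inv Me hMe, dotProduct_add, dotProduct_smul, hC]
  -- potential energy change
  have hPot : (Mv *ᵥ g) ⬝ᵥ x1 = (Mv *ᵥ g) ⬝ᵥ x0 + Δt * (vbar ⬝ᵥ (Mv *ᵥ g)) := by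
    rw [hx1]
    simp [dotProduct_add, dotProduct_smul, dotProduct_comm]
  -- kinetic energy change
  have hdiff : Mv *ᵥ v1 - Mv *ᵥ v0
      = Δt • (-(F *ᵥ fun _ => (1:ℝ)) + Mv *ᵥ g) := by
    rw [hv1]
    simp [Matrix.mulVec_add, Matrix.mulVec_smul, Matrix.mulVec_neg, ← Matrix.mul_assoc,
      Matrix.mul_nonsing_inv Mv hMv]
  have hKin : v1 ⬝ᵥ (Mv *ᵥ v1) - v0 ⬝ᵥ (Mv *ᵥ v0)
      = (v0 + v1) ⬝ᵥ (Mv *ᵥ v1 - Mv *ᵥ v0) := by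
    simp only [add_dotProduct, dotProduct_sub]
    rw [hS v0 v1]
    ring
  rw [hdiff] at hKin
  have hvb : (v0 + v1) = (2:ℝ) • vbar := by rw [hvbar]; ext i; simp; ring
  rw [hvb] at hKin
  simp only [smul_dotProduct, dotProduct_smul, dotProduct_add,
    dotProduct_neg, smul_eq_mul] at hKin
  rw [hInt, hPot]
  linarith [hKin]
end

section
/- Let V be a nonzero finite-dimensional real inner product space and let P : V → V be a linear map with P² = P, P ≠ 0, and P ≠ id. Then the operator norms of P and of its complementary projection agree: ‖P‖ = ‖id − P‖. -/
/-!
Write `x = a + b` with `a = P x` and `b = x - P x`. Since `P b = 0`, every vector `a + t b` is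
mapped to `a`, so `‖a‖ ≤ ‖P‖ ‖a + t b‖` for all `t`. Minimizing over `t`, `‖b‖ ‖a + t b‖` becomes
the area of the parallelogram spanned by `a` and `b`, which is also the area spanned by `a` and
`x = a + b`, hence at most `‖a‖ ‖x‖`. Therefore `‖b‖ ≤ ‖P‖ ‖x‖`, i.e. `‖1 - P‖ ≤ ‖P‖`, and the
reverse inequality follows by applying this to the idempotent `1 - P`.
-/

open scoped RealInnerProductSpace

theorem IsIdempotentElem.one_le_norm {R : Type*} [NonUnitalNormedRing R] {p : R}
    (hp : IsIdempotentElem p) (h0 : p ≠ 0) : 1 ≤ ‖p‖ := by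
  have h : ‖p‖ * 1 ≤ ‖p‖ * ‖p‖ := by simpa [hp.eq] using norm_mul_le p p
  exact le_of_mul_le_mul_left h (norm_pos_iff.mpr h0)

theorem exists_norm_mul_norm_add_smul_le {V : Type*} [NormedAddCommGroup V]
    [InnerProductSpace ℝ V] (a b : V) :
    ∃ t : ℝ, ‖b‖ * ‖a + t • b‖ ≤ ‖a‖ * ‖a + b‖ := by
  rcases eq_or_ne b 0 with rfl | hb
  · exact ⟨0, by simp only [norm_zero, zero_mul]; positivity⟩
  set t : ℝ := -(⟪a, b⟫ / ‖b‖ ^ 2)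
  have ht : t * ‖b‖ ^ 2 = -⟪a, b⟫ := by
    have : ‖b‖ ≠ 0 := norm_ne_zero_iff.mpr hb
    simp only [t]
    field_simp
  refine ⟨t, (pow_le_pow_iff_left₀ (by positivity) (by positivity) two_ne_zero).mp ?_⟩
  -- both sides are Gram determinants, and `‖a‖²‖a + b‖² - ‖b‖²‖a + t b‖² = (‖a‖² + ⟪a, b⟫)²`
  have hgram : (‖b‖ * ‖a + t • b‖) ^ 2 = ‖a‖ ^ 2 * ‖b‖ ^ 2 - ⟪a, b⟫ ^ 2 := by
    rw [mul_pow, norm_add_sq_real, real_inner_smul_right, norm_smul, mul_pow,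
      Real.norm_eq_abs, sq_abs]
    linear_combination (t * ‖b‖ ^ 2 + ⟪a, b⟫) * ht
  rw [hgram, mul_pow, norm_add_sq_real]
  nlinarith [sq_nonneg (‖a‖ ^ 2 + ⟪a, b⟫)]

theorem IsIdempotentElem.norm_one_sub_le {V : Type*} [NormedAddCommGroup V]
    [InnerProductSpace ℝ V] {P : V →L[ℝ] V} (hP : IsIdempotentElem P) (h0 : P ≠ 0) :
    ‖1 - P‖ ≤ ‖P‖ := by
  have hP1 : 1 ≤ ‖P‖ := hP.one_le_norm h0
  refine ContinuousLinearMap.opNorm_le_bound _ (zero_le_one.trans hP1) fun x => ?_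
  set a := P x
  set b := x - a
  have hx : a + b = x := add_sub_cancel a x
  have hPa : P a = a := DFunLike.congr_fun hP.eq x
  have hPb : P b = 0 := by rw [map_sub, hPa, sub_self]
  change ‖b‖ ≤ ‖P‖ * ‖x‖
  obtain ⟨t, ht⟩ := exists_norm_mul_norm_add_smul_le a b
  have hPt : P (a + t • b) = a := by
    rw [map_add, map_smul, hPb, smul_zero, add_zero, hPa]
  rcases eq_or_ne a 0 with ha | ha
  · rw [← hx, ha, zero_add]
    exact le_mul_of_one_le_left (norm_nonneg b) hP1
  refine le_of_mul_le_mul_right ?_ (norm_pos_iff.mpr ha)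
  calc ‖b‖ * ‖a‖ = ‖b‖ * ‖P (a + t • b)‖ := by rw [hPt]
    _ ≤ ‖b‖ * (‖P‖ * ‖a + t • b‖) := by gcongr; exact P.le_opNorm _
    _ = ‖P‖ * (‖b‖ * ‖a + t • b‖) := by ring
    _ ≤ ‖P‖ * (‖a‖ * ‖a + b‖) := by gcongr
    _ = ‖P‖ * ‖x‖ * ‖a‖ := by rw [hx]; ring

theorem norm_idempotent_eq_norm_complement_general {V : Type*}
    [NormedAddCommGroup V] [InnerProductSpace ℝ V]
    (P : V →L[ℝ] V) (hidem : P.comp P = P)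
    (h0 : P ≠ 0) (h1 : P ≠ ContinuousLinearMap.id ℝ V) :
    ‖P‖ = ‖ContinuousLinearMap.id ℝ V - P‖ := by
  rw [← ContinuousLinearMap.one_def] at h1 ⊢
  have hP : IsIdempotentElem P := hidem
  have hQ0 : 1 - P ≠ 0 := sub_ne_zero.mpr h1.symm
  have hle : ‖P‖ ≤ ‖1 - P‖ := by
    simpa only [sub_sub_cancel] using hP.one_sub.norm_one_sub_le hQ0
  exact le_antisymm hle (hP.norm_one_sub_le h0)

/-- For a nontrivial idempotent `P` (neither `0` nor the identity) on a nonzero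
finite-dimensional real inner product space, `‖P‖ = ‖id − P‖`. -/
theorem norm_idempotent_eq_norm_complement {V : Type*}
    [NormedAddCommGroup V] [InnerProductSpace ℝ V]
    [FiniteDimensional ℝ V] [Nontrivial V]
    (P : V →L[ℝ] V) (hidem : P.comp P = P)
    (h0 : P ≠ 0) (h1 : P ≠ ContinuousLinearMap.id ℝ V) :
    ‖P‖ = ‖ContinuousLinearMap.id ℝ V - P‖ :=
  norm_idempotent_eq_norm_complement_general P hidem h0 h1
end
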